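/- For every λμ-context e and λμ-term t, the λ̄μμ̃-command (e⟨t⟩)† reduces by zero or more linear λ̄μμ̃-reduction steps to ⟨t† | e†⟩. -/
import Mathlib


set_option autoImplicit true

namespace CHSim

/-- Lift a de Bruijn renaming under a binder. -/
def upr (ξ : ℕ → ℕ) : ℕ → ℕ
  | 0 => 0
  | k+1 => ξ k + 1

/-! ## The λμ-calculus (de Bruijn representation).

λ-variables and μ-variables each have their own name space of de Bruijn
indices.  `abs t` is `λx.t` (binding λ-index 0) and `mabs c` is `μα.c`
(binding μ-index 0); `cmd a t` is the command `[a]t`. -/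

mutual
  inductive Tm : Type
    | var : ℕ → Tm
    | abs : Tm → Tm
    | app : Tm → Tm → Tm
    | mabs : Cm → Tm
  inductive Cm : Type
    | cmd : ℕ → Tm → Cm
end

/-- λμ-contexts `e ::= ⟨α⟩ | ⟨β⟩(t ·) | e · t`. -/
inductive Ct : Type
  | cvar : ℕ → Ct
  | push : ℕ → Tm → Ct
  | cons : Ct → Tm → Ct

/-- Filling a λμ-context with a term: `⟨α⟩⟨t⟩ = [α]t`,
`(⟨β⟩(u ·))⟨t⟩ = [β](u t)`, `(h · u)⟨t⟩ = h⟨t u⟩`. -/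
def fill : Ct → Tm → Cm
  | .cvar a, t => .cmd a t
  | .push b u, t => .cmd b (.app u t)
  | .cons h u, t => fill h (.app t u)

mutual
  /-- Renaming of λ-variables in λμ-terms. -/
  def renLT (ξ : ℕ → ℕ) : Tm → Tm
    | .var x => .var (ξ x)
    | .abs t => .abs (renLT (upr ξ) t)
    | .app t u => .app (renLT ξ t) (renLT ξ u)
    | .mabs c => .mabs (renLC ξ c)
  /-- Renaming of λ-variables in λμ-commands. -/
  def renLC (ξ : ℕ → ℕ) : Cm → Cm
    | .cmd a t => .cmd a (renLT ξ t)
end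

mutual
  /-- Renaming of μ-variables in λμ-terms. -/
  def renMT (ξ : ℕ → ℕ) : Tm → Tm
    | .var x => .var x
    | .abs t => .abs (renMT ξ t)
    | .app t u => .app (renMT ξ t) (renMT ξ u)
    | .mabs c => .mabs (renMC (upr ξ) c)
  /-- Renaming of μ-variables in λμ-commands. -/
  def renMC (ξ : ℕ → ℕ) : Cm → Cm
    | .cmd a t => .cmd (ξ a) (renMT ξ t)
end

/-- Renaming of λ-variables in λμ-contexts. -/
def renLE (ξ : ℕ → ℕ) : Ct → Ct
  | .cvar a => .cvar a
  | .push b t => .push b (renLT ξ t)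
  | .cons e t => .cons (renLE ξ e) (renLT ξ t)

/-- Renaming of μ-variables in λμ-contexts. -/
def renME (ξ : ℕ → ℕ) : Ct → Ct
  | .cvar a => .cvar (ξ a)
  | .push b t => .push (ξ b) (renMT ξ t)
  | .cons e t => .cons (renME ξ e) (renMT ξ t)

/-- Lifting a λ-substitution under a λ-binder. -/
def upsL (σ : ℕ → Tm) : ℕ → Tm
  | 0 => .var 0
  | k+1 => renLT Nat.succ (σ k)

mutual
  /-- (Capture-avoiding) substitution for λ-variables in λμ-terms. -/
  def lsubT (σ : ℕ → Tm) : Tm → Tm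
    | .var x => σ x
    | .abs t => .abs (lsubT (upsL σ) t)
    | .app t u => .app (lsubT σ t) (lsubT σ u)
    | .mabs c => .mabs (lsubC (fun k => renMT Nat.succ (σ k)) c)
  /-- Substitution for λ-variables in λμ-commands. -/
  def lsubC (σ : ℕ → Tm) : Cm → Cm
    | .cmd a t => .cmd a (lsubT σ t)
end

/-- Substitution for λ-variables in λμ-contexts. -/
def lsubE (σ : ℕ → Tm) : Ct → Ct
  | .cvar a => .cvar a
  | .push b t => .push b (lsubT σ t)
  | .cons e t => .cons (lsubE σ e) (lsubT σ t)

/-- The substitution replacing the λ-variable `x` by `u`. -/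
def sub1L (x : ℕ) (u : Tm) : ℕ → Tm := fun k => if k = x then u else .var k

/-- The β-substitution replacing the bound λ-variable 0 by `u`. -/
def sub0L (u : Tm) : ℕ → Tm
  | 0 => u
  | k+1 => .var k

/-- Lifting a structural (μ-)substitution under a μ-binder. -/
def upsM (σ : ℕ → Ct) : ℕ → Ct
  | 0 => .cvar 0
  | k+1 => renME Nat.succ (σ k)

mutual
  /-- Structural substitution of λμ-contexts for μ-variables in λμ-terms:
  every subcommand `[α]u` is replaced by `(σ α)⟨u[σ]⟩`. -/
  def msubT (σ : ℕ → Ct) : Tm → Tm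
    | .var x => .var x
    | .abs t => .abs (msubT (fun k => renLE Nat.succ (σ k)) t)
    | .app t u => .app (msubT σ t) (msubT σ u)
    | .mabs c => .mabs (msubC (upsM σ) c)
  /-- Structural substitution in λμ-commands. -/
  def msubC (σ : ℕ → Ct) : Cm → Cm
    | .cmd a t => fill (σ a) (msubT σ t)
end

/-- Structural substitution in λμ-contexts (the head variable of
`⟨β⟩(t ·)` is, by the freshness convention of the translations,
never the substituted variable, so it is left untouched). -/
def msubE (σ : ℕ → Ct) : Ct → Ct
  | .cvar a => σ a
  | .push b t => .push b (msubT σ t)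
  | .cons e t => .cons (msubE σ e) (msubT σ t)

/-- The structural substitution replacing the μ-variable `a` by the context `e`. -/
def sub1M (a : ℕ) (e : Ct) : ℕ → Ct := fun k => if k = a then e else .cvar k

/-- The structural substitution replacing the bound μ-variable 0 by the
context `e` (removing the binder). -/
def sub0M (e : Ct) : ℕ → Ct
  | 0 => e
  | k+1 => .cvar k

mutual
  /-- Number of free occurrences of the λ-variable `x` in a λμ-term. -/
  def cntLT (x : ℕ) : Tm → ℕ
    | .var y => if y = x then 1 else 0
    | .abs t => cntLT (x+1) t
    | .app t u => cntLT x t + cntLT x u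
    | .mabs c => cntLC x c
  /-- Number of free occurrences of the λ-variable `x` in a λμ-command. -/
  def cntLC (x : ℕ) : Cm → ℕ
    | .cmd _ t => cntLT x t
end

/-- λμ-values `v ::= x | λx.t`. -/
inductive IsVal : Tm → Prop
  | var (x : ℕ) : IsVal (.var x)
  | abs (t : Tm) : IsVal (.abs t)

/-! ### Reduction in λμ: congruence closure of root rules -/

mutual
  /-- Congruence (compatible) closure of root relations, term level. -/
  inductive KT (R1 : Tm → Tm → Prop) (R2 : Cm → Cm → Prop) : Tm → Tm → Prop
    | root {t t'} : R1 t t' → KT R1 R2 t t'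
    | absC {t t'} : KT R1 R2 t t' → KT R1 R2 (.abs t) (.abs t')
    | appL {t t'} (u) : KT R1 R2 t t' → KT R1 R2 (.app t u) (.app t' u)
    | appR (t) {u u'} : KT R1 R2 u u' → KT R1 R2 (.app t u) (.app t u')
    | mabsC {c c'} : KC R1 R2 c c' → KT R1 R2 (.mabs c) (.mabs c')
  /-- Congruence (compatible) closure of root relations, command level. -/
  inductive KC (R1 : Tm → Tm → Prop) (R2 : Cm → Cm → Prop) : Cm → Cm → Prop
    | root {c c'} : R2 c c' → KC R1 R2 c c'
    | cmdC (a) {t t'} : KT R1 R2 t t' → KC R1 R2 (.cmd a t) (.cmd a t')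
end

/-- Term-level root rules of the undirected λμ-calculus: β, μ, μ', θ. -/
inductive RootT : Tm → Tm → Prop
  | beta (u t : Tm) : RootT (.app (.abs u) t) (lsubT (sub0L t) u)
  | mu (c : Cm) (t : Tm) : RootT (.app (.mabs c) t)
      (.mabs (msubC (sub1M 0 (.cons (.cvar 0) (renMT Nat.succ t))) c))
  | mu' (t : Tm) (c : Cm) : RootT (.app t (.mabs c))
      (.mabs (msubC (sub1M 0 (.push 0 (renMT Nat.succ t))) c))
  | theta (t : Tm) : RootT (.mabs (.cmd 0 (renMT Nat.succ t))) t

/-- Command-level root rule of the λμ-calculus: ρ. -/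
inductive RootC : Cm → Cm → Prop
  | rho (b : ℕ) (c : Cm) : RootC (.cmd b (.mabs c)) (msubC (sub0M (.cvar b)) c)

/-- Term-level *linear* root rules of the λμ-calculus: θ, and β when the
argument is a variable or the bound variable occurs exactly once. -/
inductive RootTlin : Tm → Tm → Prop
  | beta (u t : Tm) : ((∃ y, t = Tm.var y) ∨ cntLT 0 u = 1) →
      RootTlin (.app (.abs u) t) (lsubT (sub0L t) u)
  | theta (t : Tm) : RootTlin (.mabs (.cmd 0 (renMT Nat.succ t))) t

/-- Term-level root rules of call-by-name λμ: β, μ, θ (no μ'). -/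
inductive RootTn : Tm → Tm → Prop
  | beta (u t : Tm) : RootTn (.app (.abs u) t) (lsubT (sub0L t) u)
  | mu (c : Cm) (t : Tm) : RootTn (.app (.mabs c) t)
      (.mabs (msubC (sub1M 0 (.cons (.cvar 0) (renMT Nat.succ t))) c))
  | theta (t : Tm) : RootTn (.mabs (.cmd 0 (renMT Nat.succ t))) t

/-- Term-level root rules of call-by-value λμ: βv, μv, μ', θ. -/
inductive RootTv : Tm → Tm → Prop
  | betav (u t : Tm) : IsVal t → RootTv (.app (.abs u) t) (lsubT (sub0L t) u)
  | muv (c : Cm) (t : Tm) : IsVal t → RootTv (.app (.mabs c) t)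
      (.mabs (msubC (sub1M 0 (.cons (.cvar 0) (renMT Nat.succ t))) c))
  | mu' (t : Tm) (c : Cm) : RootTv (.app t (.mabs c))
      (.mabs (msubC (sub1M 0 (.push 0 (renMT Nat.succ t))) c))
  | theta (t : Tm) : RootTv (.mabs (.cmd 0 (renMT Nat.succ t))) t

/-- Term-level *linear call-by-value* root rules of λμ. -/
inductive RootTvlin : Tm → Tm → Prop
  | betav (u t : Tm) : IsVal t → ((∃ y, t = Tm.var y) ∨ cntLT 0 u = 1) →
      RootTvlin (.app (.abs u) t) (lsubT (sub0L t) u)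
  | theta (t : Tm) : RootTvlin (.mabs (.cmd 0 (renMT Nat.succ t))) t

/-- One-step λμ-reduction (β, μ, μ', ρ, θ), terms. -/
abbrev StepT := KT RootT RootC
/-- One-step λμ-reduction (β, μ, μ', ρ, θ), commands. -/
abbrev StepC := KC RootT RootC
/-- One-step linear λμ-reduction, terms. -/
abbrev LStepT := KT RootTlin RootC
/-- One-step linear λμ-reduction, commands. -/
abbrev LStepC := KC RootTlin RootC
/-- One-step call-by-name λμ-reduction, terms. -/
abbrev StepNT := KT RootTn RootC
/-- One-step call-by-name λμ-reduction, commands. -/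
abbrev StepNC := KC RootTn RootC
/-- One-step call-by-value λμ-reduction, terms. -/
abbrev StepVT := KT RootTv RootC
/-- One-step call-by-value λμ-reduction, commands. -/
abbrev StepVC := KC RootTv RootC
/-- One-step linear call-by-value λμ-reduction, terms. -/
abbrev LStepVT := KT RootTvlin RootC
/-- One-step linear call-by-value λμ-reduction, commands. -/
abbrev LStepVC := KC RootTvlin RootC

/-- Reflexive-transitive closure. -/
abbrev Star {α : Type} (r : α → α → Prop) : α → α → Prop := Relation.ReflTransGen r

/-! ## The λ̄μμ̃-calculus (de Bruijn representation). -/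

mutual
  inductive BTm : Type
    | var : ℕ → BTm
    | abs : BTm → BTm
    | mabs : BCm → BTm
  inductive BCm : Type
    | cut : BTm → BCt → BCm
  inductive BCt : Type
    | cvar : ℕ → BCt
    | cons : BTm → BCt → BCt
    | tmu : BCm → BCt
end

mutual
  /-- Renaming of λ-variables in λ̄μμ̃-terms. -/
  def brenLT (ξ : ℕ → ℕ) : BTm → BTm
    | .var x => .var (ξ x)
    | .abs t => .abs (brenLT (upr ξ) t)
    | .mabs c => .mabs (brenLC ξ c)
  def brenLC (ξ : ℕ → ℕ) : BCm → BCm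
    | .cut t e => .cut (brenLT ξ t) (brenLE ξ e)
  def brenLE (ξ : ℕ → ℕ) : BCt → BCt
    | .cvar a => .cvar a
    | .cons t e => .cons (brenLT ξ t) (brenLE ξ e)
    | .tmu c => .tmu (brenLC (upr ξ) c)
end

mutual
  /-- Renaming of μ-variables in λ̄μμ̃-terms. -/
  def brenMT (ξ : ℕ → ℕ) : BTm → BTm
    | .var x => .var x
    | .abs t => .abs (brenMT ξ t)
    | .mabs c => .mabs (brenMC (upr ξ) c)
  def brenMC (ξ : ℕ → ℕ) : BCm → BCm
    | .cut t e => .cut (brenMT ξ t) (brenME ξ e)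
  def brenME (ξ : ℕ → ℕ) : BCt → BCt
    | .cvar a => .cvar (ξ a)
    | .cons t e => .cons (brenMT ξ t) (brenME ξ e)
    | .tmu c => .tmu (brenMC ξ c)
end

def bupsL (σ : ℕ → BTm) : ℕ → BTm
  | 0 => .var 0
  | k+1 => brenLT Nat.succ (σ k)

mutual
  /-- Substitution for λ-variables in λ̄μμ̃-terms. -/
  def blsubT (σ : ℕ → BTm) : BTm → BTm
    | .var x => σ x
    | .abs t => .abs (blsubT (bupsL σ) t)
    | .mabs c => .mabs (blsubC (fun k => brenMT Nat.succ (σ k)) c)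
  def blsubC (σ : ℕ → BTm) : BCm → BCm
    | .cut t e => .cut (blsubT σ t) (blsubE σ e)
  def blsubE (σ : ℕ → BTm) : BCt → BCt
    | .cvar a => .cvar a
    | .cons t e => .cons (blsubT σ t) (blsubE σ e)
    | .tmu c => .tmu (blsubC (bupsL σ) c)
end

def bsub1L (x : ℕ) (u : BTm) : ℕ → BTm := fun k => if k = x then u else .var k

def bsub0L (u : BTm) : ℕ → BTm
  | 0 => u
  | k+1 => .var k

def bupsM (σ : ℕ → BCt) : ℕ → BCt
  | 0 => .cvar 0
  | k+1 => brenME Nat.succ (σ k)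

mutual
  /-- Structural substitution of contexts for μ-variables in λ̄μμ̃-terms. -/
  def bmsubT (σ : ℕ → BCt) : BTm → BTm
    | .var x => .var x
    | .abs t => .abs (bmsubT (fun k => brenLE Nat.succ (σ k)) t)
    | .mabs c => .mabs (bmsubC (bupsM σ) c)
  def bmsubC (σ : ℕ → BCt) : BCm → BCm
    | .cut t e => .cut (bmsubT σ t) (bmsubE σ e)
  def bmsubE (σ : ℕ → BCt) : BCt → BCt
    | .cvar a => σ a
    | .cons t e => .cons (bmsubT σ t) (bmsubE σ e)
    | .tmu c => .tmu (bmsubC (fun k => brenLE Nat.succ (σ k)) c)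
end

def bsub1M (a : ℕ) (e : BCt) : ℕ → BCt := fun k => if k = a then e else .cvar k

def bsub0M (e : BCt) : ℕ → BCt
  | 0 => e
  | k+1 => .cvar k

mutual
  /-- Number of free occurrences of the λ-variable `x` in a λ̄μμ̃-term. -/
  def bcntLT (x : ℕ) : BTm → ℕ
    | .var y => if y = x then 1 else 0
    | .abs t => bcntLT (x+1) t
    | .mabs c => bcntLC x c
  def bcntLC (x : ℕ) : BCm → ℕ
    | .cut t e => bcntLT x t + bcntLE x e
  def bcntLE (x : ℕ) : BCt → ℕ
    | .cvar _ => 0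
    | .cons t e => bcntLT x t + bcntLE x e
    | .tmu c => bcntLC (x+1) c
end

mutual
  /-- Number of free occurrences of the μ-variable `a` in a λ̄μμ̃-term. -/
  def bcntMT (a : ℕ) : BTm → ℕ
    | .var _ => 0
    | .abs t => bcntMT a t
    | .mabs c => bcntMC (a+1) c
  def bcntMC (a : ℕ) : BCm → ℕ
    | .cut t e => bcntMT a t + bcntME a e
  def bcntME (a : ℕ) : BCt → ℕ
    | .cvar b => if b = a then 1 else 0
    | .cons t e => bcntMT a t + bcntME a e
    | .tmu c => bcntMC a c
end

/-- λ̄μμ̃-values `v ::= x | λx.t`. -/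
inductive BIsVal : BTm → Prop
  | var (x : ℕ) : BIsVal (.var x)
  | abs (t : BTm) : BIsVal (.abs t)

/-- Stacks (the contexts of λ̄μμ̃_T): `s ::= α | t · s`. -/
inductive IsStk : BCt → Prop
  | cvar (a : ℕ) : IsStk (.cvar a)
  | cons (t : BTm) {s : BCt} : IsStk s → IsStk (.cons t s)

/-! ### Reduction in λ̄μμ̃: congruence closure of root rules -/

mutual
  inductive JT (R1 : BTm → BTm → Prop) (R2 : BCm → BCm → Prop) : BTm → BTm → Prop
    | root {t t'} : R1 t t' → JT R1 R2 t t'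
    | absC {t t'} : JT R1 R2 t t' → JT R1 R2 (.abs t) (.abs t')
    | mabsC {c c'} : JC R1 R2 c c' → JT R1 R2 (.mabs c) (.mabs c')
  inductive JC (R1 : BTm → BTm → Prop) (R2 : BCm → BCm → Prop) : BCm → BCm → Prop
    | root {c c'} : R2 c c' → JC R1 R2 c c'
    | cutL {t t'} (e) : JT R1 R2 t t' → JC R1 R2 (.cut t e) (.cut t' e)
    | cutR (t) {e e'} : JE R1 R2 e e' → JC R1 R2 (.cut t e) (.cut t e')
  inductive JE (R1 : BTm → BTm → Prop) (R2 : BCm → BCm → Prop) : BCt → BCt → Prop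
    | consL {t t'} (e) : JT R1 R2 t t' → JE R1 R2 (.cons t e) (.cons t' e)
    | consR (t) {e e'} : JE R1 R2 e e' → JE R1 R2 (.cons t e) (.cons t e')
    | tmuC {c c'} : JC R1 R2 c c' → JE R1 R2 (.tmu c) (.tmu c')
end

/-- The term-level root rule of λ̄μμ̃: θ (shared by all evaluation disciplines). -/
inductive BRootT : BTm → BTm → Prop
  | theta (t : BTm) : BRootT (.mabs (.cut (brenMT Nat.succ t) (.cvar 0))) t

/-- Command-level root rules of the undirected λ̄μμ̃-calculus: β, μ, μ̃. -/
inductive BRootC : BCm → BCm → Prop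
  | beta (u t : BTm) (e : BCt) :
      BRootC (.cut (.abs u) (.cons t e)) (.cut t (.tmu (.cut u (brenLE Nat.succ e))))
  | mu (c : BCm) (e : BCt) : BRootC (.cut (.mabs c) e) (bmsubC (bsub0M e) c)
  | mutilde (t : BTm) (c : BCm) : BRootC (.cut t (.tmu c)) (blsubC (bsub0L t) c)

/-- Command-level *linear* root rules of λ̄μμ̃: β always; μ (resp. μ̃) when the
substituted context (resp. term) is a variable or the bound variable occurs
exactly once in the command. -/
inductive BRootClin : BCm → BCm → Prop
  | beta (u t : BTm) (e : BCt) :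
      BRootClin (.cut (.abs u) (.cons t e)) (.cut t (.tmu (.cut u (brenLE Nat.succ e))))
  | mu (c : BCm) (e : BCt) : ((∃ a, e = BCt.cvar a) ∨ bcntMC 0 c = 1) →
      BRootClin (.cut (.mabs c) e) (bmsubC (bsub0M e) c)
  | mutilde (t : BTm) (c : BCm) : ((∃ x, t = BTm.var x) ∨ bcntLC 0 c = 1) →
      BRootClin (.cut t (.tmu c)) (blsubC (bsub0L t) c)

/-- Command-level root rules of call-by-name λ̄μμ̃ (λ̄μμ̃_T): β, μₙ (stacks), μ̃. -/
inductive BRootCn : BCm → BCm → Prop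
  | beta (u t : BTm) (e : BCt) :
      BRootCn (.cut (.abs u) (.cons t e)) (.cut t (.tmu (.cut u (brenLE Nat.succ e))))
  | mun (c : BCm) (s : BCt) : IsStk s → BRootCn (.cut (.mabs c) s) (bmsubC (bsub0M s) c)
  | mutilde (t : BTm) (c : BCm) : BRootCn (.cut t (.tmu c)) (blsubC (bsub0L t) c)

/-- Command-level *linear call-by-name* root rules of λ̄μμ̃. -/
inductive BRootCnlin : BCm → BCm → Prop
  | beta (u t : BTm) (e : BCt) :
      BRootCnlin (.cut (.abs u) (.cons t e)) (.cut t (.tmu (.cut u (brenLE Nat.succ e))))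
  | mun (c : BCm) (s : BCt) : IsStk s → ((∃ a, s = BCt.cvar a) ∨ bcntMC 0 c = 1) →
      BRootCnlin (.cut (.mabs c) s) (bmsubC (bsub0M s) c)
  | mutilde (t : BTm) (c : BCm) : ((∃ x, t = BTm.var x) ∨ bcntLC 0 c = 1) →
      BRootCnlin (.cut t (.tmu c)) (blsubC (bsub0L t) c)

/-- Command-level root rules of call-by-value λ̄μμ̃ (λ̄μμ̃_Q): β, μ, μ̃ᵥ (values). -/
inductive BRootCv : BCm → BCm → Prop
  | beta (u t : BTm) (e : BCt) :
      BRootCv (.cut (.abs u) (.cons t e)) (.cut t (.tmu (.cut u (brenLE Nat.succ e))))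
  | mu (c : BCm) (e : BCt) : BRootCv (.cut (.mabs c) e) (bmsubC (bsub0M e) c)
  | mutildev (v : BTm) (c : BCm) : BIsVal v →
      BRootCv (.cut v (.tmu c)) (blsubC (bsub0L v) c)

/-- Command-level *linear call-by-value* root rules of λ̄μμ̃. -/
inductive BRootCvlin : BCm → BCm → Prop
  | beta (u t : BTm) (e : BCt) :
      BRootCvlin (.cut (.abs u) (.cons t e)) (.cut t (.tmu (.cut u (brenLE Nat.succ e))))
  | mu (c : BCm) (e : BCt) : ((∃ a, e = BCt.cvar a) ∨ bcntMC 0 c = 1) →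
      BRootCvlin (.cut (.mabs c) e) (bmsubC (bsub0M e) c)
  | mutildev (v : BTm) (c : BCm) : BIsVal v → ((∃ x, v = BTm.var x) ∨ bcntLC 0 c = 1) →
      BRootCvlin (.cut v (.tmu c)) (blsubC (bsub0L v) c)

/-- Command-level root rules with β' instead of β: β', μ, μ̃. -/
inductive BRootCp : BCm → BCm → Prop
  | beta' (u t : BTm) (e : BCt) :
      BRootCp (.cut (.abs u) (.cons t e)) (.cut (blsubT (bsub0L t) u) e)
  | mu (c : BCm) (e : BCt) : BRootCp (.cut (.mabs c) e) (bmsubC (bsub0M e) c)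
  | mutilde (t : BTm) (c : BCm) : BRootCp (.cut t (.tmu c)) (blsubC (bsub0L t) c)

/-- Command-level call-by-name root rules with β': β', μₙ, μ̃. -/
inductive BRootCnp : BCm → BCm → Prop
  | beta' (u t : BTm) (e : BCt) :
      BRootCnp (.cut (.abs u) (.cons t e)) (.cut (blsubT (bsub0L t) u) e)
  | mun (c : BCm) (s : BCt) : IsStk s → BRootCnp (.cut (.mabs c) s) (bmsubC (bsub0M s) c)
  | mutilde (t : BTm) (c : BCm) : BRootCnp (.cut t (.tmu c)) (blsubC (bsub0L t) c)

/-- Command-level call-by-value root rules with β': β' (values), μ, μ̃ᵥ. -/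
inductive BRootCvp : BCm → BCm → Prop
  | beta' (u v : BTm) (e : BCt) : BIsVal v →
      BRootCvp (.cut (.abs u) (.cons v e)) (.cut (blsubT (bsub0L v) u) e)
  | mu (c : BCm) (e : BCt) : BRootCvp (.cut (.mabs c) e) (bmsubC (bsub0M e) c)
  | mutildev (v : BTm) (c : BCm) : BIsVal v →
      BRootCvp (.cut v (.tmu c)) (blsubC (bsub0L v) c)

/-- One-step λ̄μμ̃-reduction (β, μ, μ̃, θ), terms. -/
abbrev BStepT := JT BRootT BRootC
abbrev BStepC := JC BRootT BRootC
abbrev BStepE := JE BRootT BRootC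
/-- One-step linear λ̄μμ̃-reduction. -/
abbrev LBStepT := JT BRootT BRootClin
abbrev LBStepC := JC BRootT BRootClin
abbrev LBStepE := JE BRootT BRootClin
/-- One-step call-by-name λ̄μμ̃-reduction. -/
abbrev BStepNT := JT BRootT BRootCn
abbrev BStepNC := JC BRootT BRootCn
abbrev BStepNE := JE BRootT BRootCn
/-- One-step linear call-by-name λ̄μμ̃-reduction. -/
abbrev LBStepNT := JT BRootT BRootCnlin
abbrev LBStepNC := JC BRootT BRootCnlin
/-- One-step call-by-value λ̄μμ̃-reduction. -/
abbrev BStepVT := JT BRootT BRootCv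
abbrev BStepVC := JC BRootT BRootCv
/-- One-step linear call-by-value λ̄μμ̃-reduction. -/
abbrev LBStepVT := JT BRootT BRootCvlin
abbrev LBStepVC := JC BRootT BRootCvlin
/-- One-step λ̄μμ̃-reduction with β' (β', μ, μ̃, θ). -/
abbrev BStepPT := JT BRootT BRootCp
abbrev BStepPC := JC BRootT BRootCp
/-- One-step call-by-name λ̄μμ̃-reduction with β'. -/
abbrev BStepNPT := JT BRootT BRootCnp
abbrev BStepNPC := JC BRootT BRootCnp
/-- One-step call-by-value λ̄μμ̃-reduction with β'. -/
abbrev BStepVPT := JT BRootT BRootCvp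
abbrev BStepVPC := JC BRootT BRootCvp

/-! ## The translation `(·)†` from λμ to λ̄μμ̃ -/

mutual
  /-- `x† = x`, `(λx.u)† = λx.u†`, `(u v)† = μβ.⟨v† | μ̃y.⟨u† | y·β⟩⟩`
  (`y`, `β` fresh, realized by de Bruijn lifting), `(μα.c)† = μα.c†`. -/
  def dagT : Tm → BTm
    | .var x => .var x
    | .abs t => .abs (dagT t)
    | .app u v => .mabs (.cut (brenMT Nat.succ (dagT v))
        (.tmu (.cut (brenLT Nat.succ (brenMT Nat.succ (dagT u)))
          (.cons (.var 0) (.cvar 0)))))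
    | .mabs c => .mabs (dagC c)
  /-- `([α]t)† = ⟨t† | α⟩`. -/
  def dagC : Cm → BCm
    | .cmd a t => .cut (dagT t) (.cvar a)
end

/-- `⟨α⟩† = α`, `(⟨β⟩(t ·))† = μ̃y.⟨t† | y·β⟩`, `(h · t)† = t† · h†`. -/
def dagE : Ct → BCt
  | .cvar a => .cvar a
  | .push b t => .tmu (.cut (brenLT Nat.succ (dagT t)) (.cons (.var 0) (.cvar b)))
  | .cons e t => .cons (dagT t) (dagE e)

/-! ## The translation `(·)∘` from λ̄μμ̃ to λμ -/

mutual
  /-- `x∘ = x`, `(λx.u)∘ = λx.u∘`, `(μα.c)∘ = μα.c∘`. -/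
  def circT : BTm → Tm
    | .var x => .var x
    | .abs t => .abs (circT t)
    | .mabs c => .mabs (circC c)
  /-- `⟨t | e⟩∘ = e∘⟨t∘⟩`. -/
  def circC : BCm → Cm
    | .cut t e => fill (circE e) (circT t)
  /-- `α∘ = ⟨α⟩`, `(t · h)∘ = h∘ · t∘`,
  `(μ̃x.c)∘ = ⟨β⟩((λx.μδ.c∘) ·)` with `δ ∉ c` (realized by lifting). -/
  def circE : BCt → Ct
    | .cvar a => .cvar a
    | .cons t e => .cons (circE e) (circT t)
    | .tmu c => .push 0 (.abs (.mabs (renMC Nat.succ (circC c))))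
end


/-! Auxiliary lemmas for `dag_cut_term`. -/

mutual
theorem brenLM_commT (x : BTm) (ξ ζ : ℕ → ℕ) :
    brenLT ξ (brenMT ζ x) = brenMT ζ (brenLT ξ x) := by
  cases x with
  | var y => simp [brenLT, brenMT]
  | abs t => simp [brenLT, brenMT, brenLM_commT t]
  | mabs c => simp [brenLT, brenMT, brenLM_commC c]
theorem brenLM_commC (c : BCm) (ξ ζ : ℕ → ℕ) :
    brenLC ξ (brenMC ζ c) = brenMC ζ (brenLC ξ c) := by
  cases c with
  | cut t e => simp [brenLC, brenMC, brenLM_commT t, brenLM_commE e]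
theorem brenLM_commE (e : BCt) (ξ ζ : ℕ → ℕ) :
    brenLE ξ (brenME ζ e) = brenME ζ (brenLE ξ e) := by
  cases e with
  | cvar a => simp [brenLE, brenME]
  | cons t e => simp [brenLE, brenME, brenLM_commT t, brenLM_commE e]
  | tmu c => simp [brenLE, brenME, brenLM_commC c]
end

mutual
theorem bmsub_ren_idT (x : BTm) (σ : ℕ → BCt) (ξ : ℕ → ℕ)
    (h : ∀ k, σ (ξ k) = .cvar k) : bmsubT σ (brenMT ξ x) = x := by
  cases x with
  | var y => simp [brenMT, bmsubT]
  | abs t =>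
    simp only [brenMT, bmsubT, BTm.abs.injEq]
    exact bmsub_ren_idT t _ _ (fun k => by simp [h k, brenLE])
  | mabs c =>
    simp only [brenMT, bmsubT, BTm.mabs.injEq]
    exact bmsub_ren_idC c _ _ (fun k => by
      cases k with
      | zero => simp [upr, bupsM]
      | succ k => simp [upr, bupsM, h k, brenME])
theorem bmsub_ren_idC (c : BCm) (σ : ℕ → BCt) (ξ : ℕ → ℕ)
    (h : ∀ k, σ (ξ k) = .cvar k) : bmsubC σ (brenMC ξ c) = c := by
  cases c with
  | cut t e =>
    simp only [brenMC, bmsubC, BCm.cut.injEq]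
    exact ⟨bmsub_ren_idT t _ _ h, bmsub_ren_idE e _ _ h⟩
theorem bmsub_ren_idE (e : BCt) (σ : ℕ → BCt) (ξ : ℕ → ℕ)
    (h : ∀ k, σ (ξ k) = .cvar k) : bmsubE σ (brenME ξ e) = e := by
  cases e with
  | cvar a => simp [brenME, bmsubE, h a]
  | cons t e =>
    simp only [brenME, bmsubE, BCt.cons.injEq]
    exact ⟨bmsub_ren_idT t _ _ h, bmsub_ren_idE e _ _ h⟩
  | tmu c =>
    simp only [brenME, bmsubE, BCt.tmu.injEq]
    exact bmsub_ren_idC c _ _ (fun k => by simp [h k, brenLE])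
end

mutual
theorem blsub_ren_idT (x : BTm) (σ : ℕ → BTm) (ξ : ℕ → ℕ)
    (h : ∀ k, σ (ξ k) = .var k) : blsubT σ (brenLT ξ x) = x := by
  cases x with
  | var y => simp [brenLT, blsubT, h y]
  | abs t =>
    simp only [brenLT, blsubT, BTm.abs.injEq]
    exact blsub_ren_idT t _ _ (fun k => by
      cases k with
      | zero => simp [upr, bupsL]
      | succ k => simp [upr, bupsL, h k, brenLT])
  | mabs c =>
    simp only [brenLT, blsubT, BTm.mabs.injEq]
    exact blsub_ren_idC c _ _ (fun k => by simp [h k, brenMT])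
theorem blsub_ren_idC (c : BCm) (σ : ℕ → BTm) (ξ : ℕ → ℕ)
    (h : ∀ k, σ (ξ k) = .var k) : blsubC σ (brenLC ξ c) = c := by
  cases c with
  | cut t e =>
    simp only [brenLC, blsubC, BCm.cut.injEq]
    exact ⟨blsub_ren_idT t _ _ h, blsub_ren_idE e _ _ h⟩
theorem blsub_ren_idE (e : BCt) (σ : ℕ → BTm) (ξ : ℕ → ℕ)
    (h : ∀ k, σ (ξ k) = .var k) : blsubE σ (brenLE ξ e) = e := by
  cases e with
  | cvar a => simp [brenLE, blsubE]
  | cons t e =>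
    simp only [brenLE, blsubE, BCt.cons.injEq]
    exact ⟨blsub_ren_idT t _ _ h, blsub_ren_idE e _ _ h⟩
  | tmu c =>
    simp only [brenLE, blsubE, BCt.tmu.injEq]
    exact blsub_ren_idC c _ _ (fun k => by
      cases k with
      | zero => simp [upr, bupsL]
      | succ k => simp [upr, bupsL, h k, brenLT])
end

mutual
theorem bcntM_brenM_zeroT (x : BTm) (a : ℕ) (ξ : ℕ → ℕ)
    (h : ∀ k, ξ k ≠ a) : bcntMT a (brenMT ξ x) = 0 := by
  cases x with
  | var y => simp [brenMT, bcntMT]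
  | abs t => simp [brenMT, bcntMT, bcntM_brenM_zeroT t a ξ h]
  | mabs c =>
    simp only [brenMT, bcntMT]
    exact bcntM_brenM_zeroC c _ _ (fun k => by
      cases k with
      | zero => simp [upr]
      | succ k => simpa [upr] using h k)
theorem bcntM_brenM_zeroC (c : BCm) (a : ℕ) (ξ : ℕ → ℕ)
    (h : ∀ k, ξ k ≠ a) : bcntMC a (brenMC ξ c) = 0 := by
  cases c with
  | cut t e =>
    simp [brenMC, bcntMC, bcntM_brenM_zeroT t a ξ h, bcntM_brenM_zeroE e a ξ h]
theorem bcntM_brenM_zeroE (e : BCt) (a : ℕ) (ξ : ℕ → ℕ)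
    (h : ∀ k, ξ k ≠ a) : bcntME a (brenME ξ e) = 0 := by
  cases e with
  | cvar b => simp [brenME, bcntME, h b]
  | cons t e =>
    simp [brenME, bcntME, bcntM_brenM_zeroT t a ξ h, bcntM_brenM_zeroE e a ξ h]
  | tmu c => simp [brenME, bcntME, bcntM_brenM_zeroC c a ξ h]
end

mutual
theorem bcntM_brenLT (x : BTm) (a : ℕ) (ξ : ℕ → ℕ) :
    bcntMT a (brenLT ξ x) = bcntMT a x := by
  cases x with
  | var y => simp [brenLT, bcntMT]
  | abs t => simp [brenLT, bcntMT, bcntM_brenLT t]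
  | mabs c => simp [brenLT, bcntMT, bcntM_brenLC c]
theorem bcntM_brenLC (c : BCm) (a : ℕ) (ξ : ℕ → ℕ) :
    bcntMC a (brenLC ξ c) = bcntMC a c := by
  cases c with
  | cut t e => simp [brenLC, bcntMC, bcntM_brenLT t, bcntM_brenLE e]
theorem bcntM_brenLE (e : BCt) (a : ℕ) (ξ : ℕ → ℕ) :
    bcntME a (brenLE ξ e) = bcntME a e := by
  cases e with
  | cvar b => simp [brenLE, bcntME]
  | cons t e => simp [brenLE, bcntME, bcntM_brenLT t, bcntM_brenLE e]
  | tmu c => simp [brenLE, bcntME, bcntM_brenLC c]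
end

mutual
theorem bcntL_brenL_zeroT (x : BTm) (a : ℕ) (ξ : ℕ → ℕ)
    (h : ∀ k, ξ k ≠ a) : bcntLT a (brenLT ξ x) = 0 := by
  cases x with
  | var y => simp [brenLT, bcntLT, h y]
  | abs t =>
    simp only [brenLT, bcntLT]
    exact bcntL_brenL_zeroT t _ _ (fun k => by
      cases k with
      | zero => simp [upr]
      | succ k => simpa [upr] using h k)
  | mabs c => simp [brenLT, bcntLT, bcntL_brenL_zeroC c a ξ h]
theorem bcntL_brenL_zeroC (c : BCm) (a : ℕ) (ξ : ℕ → ℕ)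
    (h : ∀ k, ξ k ≠ a) : bcntLC a (brenLC ξ c) = 0 := by
  cases c with
  | cut t e =>
    simp [brenLC, bcntLC, bcntL_brenL_zeroT t a ξ h, bcntL_brenL_zeroE e a ξ h]
theorem bcntL_brenL_zeroE (e : BCt) (a : ℕ) (ξ : ℕ → ℕ)
    (h : ∀ k, ξ k ≠ a) : bcntLE a (brenLE ξ e) = 0 := by
  cases e with
  | cvar b => simp [brenLE, bcntLE]
  | cons t e =>
    simp [brenLE, bcntLE, bcntL_brenL_zeroT t a ξ h, bcntL_brenL_zeroE e a ξ h]
  | tmu c =>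
    simp only [brenLE, bcntLE]
    exact bcntL_brenL_zeroC c _ _ (fun k => by
      cases k with
      | zero => simp [upr]
      | succ k => simpa [upr] using h k)
end

/-- The key μ-substitution computation for the translation of an application. -/
theorem mu_app_eq (t u : BTm) (e : BCt) :
    bmsubC (bsub0M e) (.cut (brenMT Nat.succ t)
      (.tmu (.cut (brenLT Nat.succ (brenMT Nat.succ u)) (.cons (.var 0) (.cvar 0)))))
    = .cut t (.tmu (.cut (brenLT Nat.succ u) (.cons (.var 0) (brenLE Nat.succ e)))) := by
  simp only [bmsubC, bmsubT, bmsubE, BCm.cut.injEq, BCt.tmu.injEq, BCt.cons.injEq]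
  refine ⟨bmsub_ren_idT t _ _ (fun k => rfl), ?_, trivial, rfl⟩
  rw [brenLM_commT]
  exact bmsub_ren_idT (brenLT Nat.succ u) _ _ (fun k => rfl)

theorem mu_app_cnt (t u : BTm) :
    bcntMC 0 (.cut (brenMT Nat.succ t)
      (.tmu (.cut (brenLT Nat.succ (brenMT Nat.succ u)) (.cons (.var 0) (.cvar 0))))) = 1 := by
  simp [bcntMC, bcntME, bcntMT,
    bcntM_brenM_zeroT t 0 Nat.succ (fun k => Nat.succ_ne_zero k),
    bcntM_brenLT, bcntM_brenM_zeroT u 0 Nat.succ (fun k => Nat.succ_ne_zero k)]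

theorem mut_cons_eq (t u : BTm) (e : BCt) :
    blsubC (bsub0L t) (.cut (brenLT Nat.succ u) (.cons (.var 0) (brenLE Nat.succ e)))
    = .cut u (.cons t e) := by
  simp only [blsubC, blsubT, blsubE, BCm.cut.injEq, BCt.cons.injEq]
  exact ⟨blsub_ren_idT u _ _ (fun k => rfl), rfl,
    blsub_ren_idE e _ _ (fun k => rfl)⟩

theorem mut_cons_cnt (u : BTm) (e : BCt) :
    bcntLC 0 (.cut (brenLT Nat.succ u) (.cons (.var 0) (brenLE Nat.succ e))) = 1 := by
  simp [bcntLC, bcntLE, bcntLT,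
    bcntL_brenL_zeroT u 0 Nat.succ (fun k => Nat.succ_ne_zero k),
    bcntL_brenL_zeroE e 0 Nat.succ (fun k => Nat.succ_ne_zero k)]

/-- for every λμ-context `e` and λμ-term `t`, the λ̄μμ̃-command
`(e⟨t⟩)†` reduces by zero or more linear λ̄μμ̃-steps to `⟨t† | e†⟩`. -/
theorem dag_cut_term (e : Ct) (t : Tm) :
    Star LBStepC (dagC (fill e t)) (BCm.cut (dagT t) (dagE e)) := by
  induction e generalizing t with
  | cvar a => exact Relation.ReflTransGen.refl
  | push b u =>
    refine Relation.ReflTransGen.single ?_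
    have step : LBStepC (dagC (fill (.push b u) t))
        (bmsubC (bsub0M (.cvar b)) (.cut (brenMT Nat.succ (dagT t))
          (.tmu (.cut (brenLT Nat.succ (brenMT Nat.succ (dagT u)))
            (.cons (.var 0) (.cvar 0)))))) :=
      JC.root (BRootClin.mu _ _ (Or.inl ⟨b, rfl⟩))
    have heq := mu_app_eq (dagT t) (dagT u) (BCt.cvar b)
    rw [heq] at step
    exact step
  | cons h u ih =>
    have s1 : Star LBStepC (dagC (fill (.cons h u) t))
        (BCm.cut (dagT (.app t u)) (dagE h)) := ih (.app t u)
    have step1 : LBStepC (BCm.cut (dagT (.app t u)) (dagE h))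
        (bmsubC (bsub0M (dagE h)) (.cut (brenMT Nat.succ (dagT u))
          (.tmu (.cut (brenLT Nat.succ (brenMT Nat.succ (dagT t)))
            (.cons (.var 0) (.cvar 0)))))) :=
      JC.root (BRootClin.mu _ _ (Or.inr (mu_app_cnt (dagT u) (dagT t))))
    rw [mu_app_eq (dagT u) (dagT t) (dagE h)] at step1
    have step2 : LBStepC
        (BCm.cut (dagT u) (.tmu (.cut (brenLT Nat.succ (dagT t))
          (.cons (.var 0) (brenLE Nat.succ (dagE h))))))
        (blsubC (bsub0L (dagT u)) (.cut (brenLT Nat.succ (dagT t))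
          (.cons (.var 0) (brenLE Nat.succ (dagE h))))) :=
      JC.root (BRootClin.mutilde _ _ (Or.inr (mut_cons_cnt (dagT t) (dagE h))))
    rw [mut_cons_eq (dagT u) (dagT t) (dagE h)] at step2
    exact (s1.tail step1).tail step2


end CHSim
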